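/- arXiv:1310.3520 — 2 statements merged into one kernel-verified Lean document; each statement's English description precedes it below -/
import Mathlib

section
/- Let A = [[A11, A12, 0],[A21, a22, A23],[0, A32, A33]] be a real matrix where A11 is m1×n1, A33 is m2×n2, a22 is a scalar, A12 is m1×1, A21 is 1×n1, A23 is 1×n2, A32 is m2×1. Suppose there exists v ∈ R^{m1} with v^T A11 = A21 and z ∈ R^{n1} with A11 z = A12, and similarly the row [A23] lies in the row space of A33 and the column A32 lies in the column space of A33 (equivalently, [A21 A23] x = 0 for all x ∈ ker(A11 ⊕ A33) and y^T [A12; A32] = 0 for all y ∈ ker((A11 ⊕ A33)^T)). Then rank(A) = rank([[A11, A12],[A21, v^T A11 z]]) + rank([[a22 − v^T A11 z, A23],[A32, A33]]). -/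
/-!
Block Gaussian elimination: unit triangular row and column operations turn
`[[A, A Z], [V A, D]]` into `diag(A, D - V A Z)`, so its rank is `rank A + rank (D - V A Z)`.
By hypothesis `A12 = A11 z` and `A21 = vᵀ A11`. For the `2 × 2` matrix the remainder is
`vᵀ A11 z - vᵀ A11 z = 0`; the `3 × 3` matrix has the same shape once its last two block rows
and columns are grouped, with `V = [vᵀ; 0]`, `Z = [z, 0]`, and remainder
`[[a22 - vᵀ A11 z, A23], [A32, A33]]`.
-/

open Matrix Module

namespace Submodule

variable {R M N : Type*} [Semiring R] [AddCommMonoid M] [AddCommMonoid N] [Module R M] [Module R N]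

def prodEquivProd (p : Submodule R M) (q : Submodule R N) : p.prod q ≃ₗ[R] p × q where
  toFun x := (⟨x.1.1, x.2.1⟩, ⟨x.1.2, x.2.2⟩)
  invFun x := ⟨(x.1.1, x.2.1), ⟨x.1.2, x.2.2⟩⟩
  map_add' _ _ := rfl
  map_smul' _ _ := rfl
  left_inv _ := rfl
  right_inv _ := rfl

end Submodule

theorem Submodule.finrank_prod {K V W : Type*} [DivisionRing K] [AddCommGroup V] [Module K V]
    [AddCommGroup W] [Module K W] (p : Submodule K V) (q : Submodule K W)
    [FiniteDimensional K p] [FiniteDimensional K q] :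
    finrank K (p.prod q) = finrank K p + finrank K q := by
  rw [(p.prodEquivProd q).finrank_eq, Module.finrank_prod]

namespace Matrix

variable {K l₁ l₂ l₃ k₁ k₂ k₃ : Type*}

theorem fromBlocks_fromBlocks_submatrix_sumAssoc
    (A : Matrix l₁ k₁ K) (B : Matrix l₁ k₂ K) (C : Matrix l₂ k₁ K) (D : Matrix l₂ k₂ K)
    (X : Matrix l₁ k₃ K) (E : Matrix l₂ k₃ K) (Y : Matrix l₃ k₁ K) (F : Matrix l₃ k₂ K)
    (G : Matrix l₃ k₃ K) :
    (fromBlocks (fromBlocks A B C D) (fromRows X E) (fromCols Y F) G).submatrix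
        (Equiv.sumAssoc l₁ l₂ l₃).symm (Equiv.sumAssoc k₁ k₂ k₃).symm =
      fromBlocks A (fromCols B X) (fromRows C Y) (fromBlocks D E F G) := by
  ext (i | i | i) (j | j | j) <;> rfl

variable [Field K]

theorem mulVecLin_fromBlocks_zero [Fintype k₁] [Fintype k₂]
    (A : Matrix l₁ k₁ K) (B : Matrix l₂ k₂ K) :
    (fromBlocks A 0 0 B).mulVecLin =
      (LinearEquiv.sumArrowLequivProdArrow l₁ l₂ K K).symm.toLinearMap ∘ₗ
        A.mulVecLin.prodMap B.mulVecLin ∘ₗ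
          (LinearEquiv.sumArrowLequivProdArrow k₁ k₂ K K).toLinearMap := by
  ext x (i | i) <;> simp [mulVec, dotProduct]

theorem rank_fromBlocks_zero [Fintype l₁] [Fintype l₂] [Fintype k₁] [Fintype k₂]
    (A : Matrix l₁ k₁ K) (B : Matrix l₂ k₂ K) :
    (fromBlocks A 0 0 B).rank = A.rank + B.rank := by
  rw [rank, mulVecLin_fromBlocks_zero, LinearMap.range_comp, LinearMap.range_comp,
    LinearEquiv.range, Submodule.map_top, LinearEquiv.finrank_map_eq,
    LinearMap.range_prodMap, Submodule.finrank_prod, rank, rank]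

theorem fromBlocks_eq_mul_fromBlocks_zero_mul [Fintype l₁] [Fintype l₂] [Fintype k₁] [Fintype k₂]
    [DecidableEq l₁] [DecidableEq l₂] [DecidableEq k₁] [DecidableEq k₂]
    (A : Matrix l₁ k₁ K) (V : Matrix l₂ l₁ K) (Z : Matrix k₁ k₂ K) (D : Matrix l₂ k₂ K) :
    fromBlocks A (A * Z) (V * A) D =
      (fromBlocks 1 0 V 1 : Matrix (l₁ ⊕ l₂) (l₁ ⊕ l₂) K) * fromBlocks A 0 0 (D - V * A * Z) *
        (fromBlocks 1 Z 0 1 : Matrix (k₁ ⊕ k₂) (k₁ ⊕ k₂) K) := by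
  simp only [fromBlocks_multiply, Matrix.mul_zero, Matrix.zero_mul, Matrix.one_mul, Matrix.mul_one,
    add_zero, zero_add, Matrix.mul_assoc, add_sub_cancel]

theorem rank_fromBlocks_mul_mul [Fintype l₁] [Fintype l₂] [Fintype k₁] [Fintype k₂]
    (A : Matrix l₁ k₁ K) (V : Matrix l₂ l₁ K) (Z : Matrix k₁ k₂ K) (D : Matrix l₂ k₂ K) :
    (fromBlocks A (A * Z) (V * A) D).rank = A.rank + (D - V * A * Z).rank := by
  classical
  have hL : IsUnit (fromBlocks 1 0 V 1 : Matrix (l₁ ⊕ l₂) (l₁ ⊕ l₂) K).det := by simp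
  have hR : IsUnit (fromBlocks 1 Z 0 1 : Matrix (k₁ ⊕ k₂) (k₁ ⊕ k₂) K).det := by simp
  rw [fromBlocks_eq_mul_fromBlocks_zero_mul, rank_mul_eq_left_of_isUnit_det _ _ hR,
    rank_mul_eq_right_of_isUnit_det _ _ hL, rank_fromBlocks_zero]

end Matrix

theorem rank_one_separation_split_general (m1 n1 m2 n2 : ℕ)
    (A11 : Matrix (Fin m1) (Fin n1) ℝ) (A12 : Matrix (Fin m1) (Fin 1) ℝ)
    (A21 : Matrix (Fin 1) (Fin n1) ℝ) (a22 : ℝ)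
    (A23 : Matrix (Fin 1) (Fin n2) ℝ) (A32 : Matrix (Fin m2) (Fin 1) ℝ)
    (A33 : Matrix (Fin m2) (Fin n2) ℝ)
    (v : Fin m1 → ℝ) (z : Fin n1 → ℝ)
    (hv : Matrix.vecMul v A11 = A21 0)
    (hz : Matrix.mulVec A11 z = fun i => A12 i 0) :
    (Matrix.fromBlocks
        (Matrix.fromBlocks A11 A12 A21 (Matrix.of fun (_ : Fin 1) (_ : Fin 1) => a22))
        (Matrix.fromRows (0 : Matrix (Fin m1) (Fin n2) ℝ) A23)
        (Matrix.fromCols (0 : Matrix (Fin m2) (Fin n1) ℝ) A32) A33).rank =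
      (Matrix.fromBlocks A11 A12 A21
          (Matrix.of fun (_ : Fin 1) (_ : Fin 1) => dotProduct v (Matrix.mulVec A11 z))).rank +
        (Matrix.fromBlocks
          (Matrix.of fun (_ : Fin 1) (_ : Fin 1) => a22 - dotProduct v (Matrix.mulVec A11 z))
          A23 A32 A33).rank := by
  set V := replicateRow (Fin 1) v
  set Z := replicateCol (Fin 1) z
  have hA12 : A12 = A11 * Z := by
    rw [← replicateCol_mulVec, hz]; ext i j; fin_cases j; rfl
  have hA21 : A21 = V * A11 := by
    rw [← replicateRow_vecMul, hv]; ext i j; fin_cases i; rfl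
  have hVAZ : V * A11 * Z = of fun _ _ => v ⬝ᵥ A11 *ᵥ z := by
    rw [Matrix.mul_assoc, ← replicateCol_mulVec, replicateRow_mul_replicateCol]
  have hbig : fromBlocks (of fun _ _ => a22) A23 A32 A33 - fromRows V 0 * A11 * fromCols Z 0 =
      fromBlocks (of fun _ _ => a22 - v ⬝ᵥ A11 *ᵥ z) A23 A32 A33 := by
    rw [Matrix.mul_assoc, mul_fromCols, fromRows_mul_fromCols, ← Matrix.mul_assoc, hVAZ,
      sub_eq_add_neg, fromBlocks_neg, fromBlocks_add]
    simp only [Matrix.mul_zero, Matrix.zero_mul, neg_zero, add_zero]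
    rfl
  rw [← rank_submatrix _ (Equiv.sumAssoc _ _ _).symm (Equiv.sumAssoc _ _ _).symm,
    fromBlocks_fromBlocks_submatrix_sumAssoc, hA12, hA21, ← Matrix.zero_mul A11,
    ← fromRows_mul, ← Matrix.mul_zero A11, ← mul_fromCols, rank_fromBlocks_mul_mul, hbig,
    ← hVAZ, rank_fromBlocks_mul_mul, sub_self, rank_zero, add_zero]

/-- Case (i) of the decomposition lemma: if `A21` is in the row space of `A11`,
`A12` in the column space of `A11`, `A23` in the row space of `A33` and `A32` in the
column space of `A33`, then the rank of the 1-separated matrix splits accordingly. -/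
theorem rank_one_separation_split (m1 n1 m2 n2 : ℕ)
    (A11 : Matrix (Fin m1) (Fin n1) ℝ) (A12 : Matrix (Fin m1) (Fin 1) ℝ)
    (A21 : Matrix (Fin 1) (Fin n1) ℝ) (a22 : ℝ)
    (A23 : Matrix (Fin 1) (Fin n2) ℝ) (A32 : Matrix (Fin m2) (Fin 1) ℝ)
    (A33 : Matrix (Fin m2) (Fin n2) ℝ)
    (v : Fin m1 → ℝ) (z : Fin n1 → ℝ)
    (hv : Matrix.vecMul v A11 = A21 0)
    (hz : Matrix.mulVec A11 z = fun i => A12 i 0)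
    (hw : ∃ w : Fin m2 → ℝ, Matrix.vecMul w A33 = A23 0)
    (hu : ∃ u : Fin n2 → ℝ, Matrix.mulVec A33 u = fun i => A32 i 0) :
    (Matrix.fromBlocks
        (Matrix.fromBlocks A11 A12 A21 (Matrix.of fun (_ : Fin 1) (_ : Fin 1) => a22))
        (Matrix.fromRows (0 : Matrix (Fin m1) (Fin n2) ℝ) A23)
        (Matrix.fromCols (0 : Matrix (Fin m2) (Fin n1) ℝ) A32) A33).rank =
      (Matrix.fromBlocks A11 A12 A21
          (Matrix.of fun (_ : Fin 1) (_ : Fin 1) => dotProduct v (Matrix.mulVec A11 z))).rank +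
        (Matrix.fromBlocks
          (Matrix.of fun (_ : Fin 1) (_ : Fin 1) => a22 - dotProduct v (Matrix.mulVec A11 z))
          A23 A32 A33).rank :=
  rank_one_separation_split_general m1 n1 m2 n2 A11 A12 A21 a22 A23 A32 A33 v z hv hz
end

section
/- Let A = [[A11, A12, 0],[A21, a22, A23],[0, A32, A33]] be a real matrix where A11 is m1×n1, A33 is m2×n2, a22 is a scalar, A12 is m1×1, A21 is 1×n1, A23 is 1×n2, A32 is m2×1. Suppose [A21 A23] x = 0 for all x in ker(A11 ⊕ A33), but there exists y in ker((A11 ⊕ A33)^T) with y^T [A12; A32] ≠ 0. Then rank(A) = rank([A11; A21]) + rank([A23; A33]) + 1, where [A11; A21] denotes A11 stacked above A21 and [A23; A33] denotes A23 stacked above A33. -/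
/-!
After permuting rows and columns, `A` is the bordered matrix `[[B, c], [r, a22]]` with
`B = A11 ⊕ A33`, `c = [A12; A32]` and `r = [A21 A23]`. The vector `y` with `yᵀ B = 0` and
`yᵀ c ≠ 0` forces the last coordinate of every kernel vector of `A` to vanish, and then
`ker B ⊆ ker r` shows that `A` has the same kernel as `B ⊕ 1`, hence rank `rank B + 1`.
Testing `ker B ⊆ ker r` on vectors supported on one block gives `ker A11 ⊆ ker A21` and
`ker A33 ⊆ ker A23`, so stacking these rows changes neither `rank A11` nor `rank A33`.
-/

open Matrix Module

theorem LinearMap.finrank_range_prodMap {K M M₂ M₃ M₄ : Type*} [DivisionRing K]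
    [AddCommGroup M] [AddCommGroup M₂] [AddCommGroup M₃] [AddCommGroup M₄]
    [Module K M] [Module K M₂] [Module K M₃] [Module K M₄]
    [FiniteDimensional K M₃] [FiniteDimensional K M₄] (f : M →ₗ[K] M₃) (g : M₂ →ₗ[K] M₄) :
    finrank K (range (f.prodMap g)) = finrank K (range f) + finrank K (range g) := by
  have hinj : Function.Injective ((range f).subtype.prodMap (range g).subtype) :=
    (range f).injective_subtype.prodMap (range g).injective_subtype
  rw [range_prodMap, ← finrank_prod, ← finrank_range_of_inj hinj, range_prodMap,
    Submodule.range_subtype, Submodule.range_subtype]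

def Equiv.sumRightComm (α β γ : Type*) : (α ⊕ β) ⊕ γ ≃ (α ⊕ γ) ⊕ β :=
  (sumAssoc α β γ).trans (((Equiv.refl α).sumCongr (sumComm β γ)).trans (sumAssoc α γ β).symm)

namespace Matrix

variable {K : Type*} [Field K] {m n m₁ m₂ n₁ n₂ : Type*} [Fintype n] [Fintype n₁] [Fintype n₂]

theorem rank_eq_of_ker_mulVecLin_eq (M : Matrix m₁ n K) (N : Matrix m₂ n K)
    (h : LinearMap.ker M.mulVecLin = LinearMap.ker N.mulVecLin) : M.rank = N.rank := by
  have hM := LinearMap.finrank_range_add_finrank_ker M.mulVecLin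
  have hN := LinearMap.finrank_range_add_finrank_ker N.mulVecLin
  rw [h] at hM
  rw [rank, rank]
  omega

theorem ker_mulVecLin_fromRows (A : Matrix m₁ n K) (B : Matrix m₂ n K) :
    LinearMap.ker (fromRows A B).mulVecLin =
      LinearMap.ker A.mulVecLin ⊓ LinearMap.ker B.mulVecLin := by
  ext x
  simp [fromRows_mulVec, funext_iff, Sum.forall]

theorem rank_fromRows_eq_left (A : Matrix m₁ n K) (B : Matrix m₂ n K)
    (h : LinearMap.ker A.mulVecLin ≤ LinearMap.ker B.mulVecLin) :
    (fromRows A B).rank = A.rank :=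
  rank_eq_of_ker_mulVecLin_eq _ _ <| by rw [ker_mulVecLin_fromRows, inf_eq_left.2 h]

theorem rank_fromRows_eq_right (A : Matrix m₁ n K) (B : Matrix m₂ n K)
    (h : LinearMap.ker B.mulVecLin ≤ LinearMap.ker A.mulVecLin) :
    (fromRows A B).rank = B.rank :=
  rank_eq_of_ker_mulVecLin_eq _ _ <| by rw [ker_mulVecLin_fromRows, inf_eq_right.2 h]

theorem mulVecLin_fromBlocks_zero_zero
    (A : Matrix m₁ n₁ K) (D : Matrix m₂ n₂ K) :
    (fromBlocks A 0 0 D).mulVecLin =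
      (LinearEquiv.sumArrowLequivProdArrow m₁ m₂ K K).symm.toLinearMap ∘ₗ
        A.mulVecLin.prodMap D.mulVecLin ∘ₗ
          (LinearEquiv.sumArrowLequivProdArrow n₁ n₂ K K).toLinearMap := by
  ext x (i | i) <;>
    simp [fromBlocks_mulVec, LinearEquiv.sumArrowLequivProdArrow, Equiv.sumArrowEquivProdArrow]

theorem rank_fromBlocks_zero_zero [Fintype m₁] [Fintype m₂]
    (A : Matrix m₁ n₁ K) (D : Matrix m₂ n₂ K) :
    (fromBlocks A 0 0 D).rank = A.rank + D.rank := by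
  rw [rank, mulVecLin_fromBlocks_zero_zero, LinearMap.range_comp, LinearMap.range_comp,
    LinearEquiv.range, Submodule.map_top, LinearEquiv.finrank_map_eq,
    LinearMap.finrank_range_prodMap, rank, rank]

theorem eq_zero_of_mulVec_add_mulVec_eq_zero [Fintype m] {B : Matrix m n K}
    {c : Matrix m (Fin 1) K} {y : m → K} (hyB : y ᵥ* B = 0) (hyc : y ᵥ* c ≠ 0)
    {u : n → K} {t : Fin 1 → K} (h : B *ᵥ u + c *ᵥ t = 0) : t = 0 := by
  have hyct : (y ᵥ* c) ⬝ᵥ t = 0 := by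
    simpa only [dotProduct_add, dotProduct_mulVec, hyB, zero_dotProduct, zero_add,
      dotProduct_zero] using congrArg (y ⬝ᵥ ·) h
  obtain ⟨i, hi⟩ := Function.ne_iff.1 hyc
  ext j
  obtain rfl := Subsingleton.elim i 0
  obtain rfl := Subsingleton.elim j 0
  rw [dotProduct, Fin.sum_univ_one] at hyct
  exact (mul_eq_zero.1 hyct).resolve_left hi

theorem ker_mulVecLin_fromBlocks_eq [Fintype m] (B : Matrix m n K) (c : Matrix m (Fin 1) K)
    (r : Matrix (Fin 1) n K) (a : Matrix (Fin 1) (Fin 1) K)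
    (hr : LinearMap.ker B.mulVecLin ≤ LinearMap.ker r.mulVecLin)
    (hc : ∃ y, y ᵥ* B = 0 ∧ y ᵥ* c ≠ 0) :
    LinearMap.ker (fromBlocks B c r a).mulVecLin =
      LinearMap.ker (fromBlocks B 0 0 (1 : Matrix (Fin 1) (Fin 1) K)).mulVecLin := by
  obtain ⟨y, hyB, hyc⟩ := hc
  ext x
  simp only [LinearMap.mem_ker, mulVecLin_apply, fromBlocks_mulVec, ← Sum.elim_zero_zero,
    Sum.elim_eq_iff, zero_mulVec, add_zero, zero_add, one_mulVec]
  generalize x ∘ Sum.inl = u, x ∘ Sum.inr = t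
  constructor
  · rintro ⟨hBc, -⟩
    obtain rfl := eq_zero_of_mulVec_add_mulVec_eq_zero hyB hyc hBc
    simpa using hBc
  · rintro ⟨hBu, rfl⟩
    simpa using ⟨hBu, hr hBu⟩

theorem rank_fromBlocks_eq_rank_add_one [Fintype m] (B : Matrix m n K) (c : Matrix m (Fin 1) K)
    (r : Matrix (Fin 1) n K) (a : Matrix (Fin 1) (Fin 1) K)
    (hr : LinearMap.ker B.mulVecLin ≤ LinearMap.ker r.mulVecLin)
    (hc : ∃ y, y ᵥ* B = 0 ∧ y ᵥ* c ≠ 0) :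
    (fromBlocks B c r a).rank = B.rank + 1 := by
  rw [rank_eq_of_ker_mulVecLin_eq _ _ (ker_mulVecLin_fromBlocks_eq B c r a hr hc),
    rank_fromBlocks_zero_zero, rank_one, Fintype.card_fin]

theorem ker_mulVecLin_le_of_ker_fromBlocks_zero_zero_le (A : Matrix m₁ n₁ K)
    (D : Matrix m₂ n₂ K) (R : Matrix m n₁ K) (S : Matrix m n₂ K)
    (h : LinearMap.ker (fromBlocks A 0 0 D).mulVecLin ≤ LinearMap.ker (fromCols R S).mulVecLin) :
    LinearMap.ker A.mulVecLin ≤ LinearMap.ker R.mulVecLin ∧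
      LinearMap.ker D.mulVecLin ≤ LinearMap.ker S.mulVecLin := by
  have hB (u : n₁ → K) (v : n₂ → K) (hu : A *ᵥ u = 0) (hv : D *ᵥ v = 0) :
      R *ᵥ u + S *ᵥ v = 0 := by
    simpa [fromCols_mulVec_sumElim] using
      h (x := Sum.elim u v) (by simp [fromBlocks_mulVec, ← Sum.elim_zero_zero, hu, hv])
  exact ⟨fun u hu ↦ by simpa using hB u 0 hu (mulVec_zero D),
    fun v hv ↦ by simpa using hB 0 v (mulVec_zero A) hv⟩

theorem fromBlocks_fromBlocks_eq_submatrix {R l₁ l₂ l₃ k₁ k₂ k₃ : Type*} [Zero R]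
    (A₁₁ : Matrix l₁ k₁ R) (A₁₂ : Matrix l₁ k₂ R) (A₂₁ : Matrix l₂ k₁ R) (A₂₂ : Matrix l₂ k₂ R)
    (A₂₃ : Matrix l₂ k₃ R) (A₃₂ : Matrix l₃ k₂ R) (A₃₃ : Matrix l₃ k₃ R) :
    fromBlocks (fromBlocks A₁₁ A₁₂ A₂₁ A₂₂) (fromRows 0 A₂₃) (fromCols 0 A₃₂) A₃₃ =
      (fromBlocks (fromBlocks A₁₁ 0 0 A₃₃) (fromRows A₁₂ A₃₂) (fromCols A₂₁ A₂₃) A₂₂).submatrix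
        (Equiv.sumRightComm l₁ l₂ l₃) (Equiv.sumRightComm k₁ k₂ k₃) := by
  ext ((i | i) | i) ((j | j) | j) <;> rfl

end Matrix

/-- Case (ii) of the decomposition lemma: if `[A21 A23] x = 0` for all
`x ∈ ker(A11 ⊕ A33)` but some `y ∈ ker((A11 ⊕ A33)ᵀ)` has `yᵀ [A12; A32] ≠ 0`,
then `rank A = rank [A11; A21] + rank [A23; A33] + 1`. -/
theorem rank_one_separation_row_case (m1 n1 m2 n2 : ℕ)
    (A11 : Matrix (Fin m1) (Fin n1) ℝ) (A12 : Matrix (Fin m1) (Fin 1) ℝ)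
    (A21 : Matrix (Fin 1) (Fin n1) ℝ) (a22 : ℝ)
    (A23 : Matrix (Fin 1) (Fin n2) ℝ) (A32 : Matrix (Fin m2) (Fin 1) ℝ)
    (A33 : Matrix (Fin m2) (Fin n2) ℝ)
    (h1 : ∀ x : Fin n1 ⊕ Fin n2 → ℝ,
      Matrix.mulVec (Matrix.fromBlocks A11 0 0 A33) x = 0 →
        Matrix.mulVec (Matrix.fromCols A21 A23) x = 0)
    (h2 : ∃ y : Fin m1 ⊕ Fin m2 → ℝ,
      Matrix.vecMul y (Matrix.fromBlocks A11 0 0 A33) = 0 ∧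
        Matrix.vecMul y (Matrix.fromRows A12 A32) ≠ 0) :
    (Matrix.fromBlocks
        (Matrix.fromBlocks A11 A12 A21 (Matrix.of fun (_ : Fin 1) (_ : Fin 1) => a22))
        (Matrix.fromRows (0 : Matrix (Fin m1) (Fin n2) ℝ) A23)
        (Matrix.fromCols (0 : Matrix (Fin m2) (Fin n1) ℝ) A32) A33).rank =
      (Matrix.fromRows A11 A21).rank + (Matrix.fromRows A23 A33).rank + 1 := by
  obtain ⟨hA11, hA33⟩ := ker_mulVecLin_le_of_ker_fromBlocks_zero_zero_le A11 A33 A21 A23 h1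
  rw [fromBlocks_fromBlocks_eq_submatrix, rank_submatrix,
    rank_fromBlocks_eq_rank_add_one _ _ _ _ h1 h2, rank_fromBlocks_zero_zero,
    rank_fromRows_eq_left _ _ hA11, rank_fromRows_eq_right _ _ hA33]
end
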